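/- The equation z² + 1 = exp(z²/2) has exactly one solution z in (0, ∞); denoting this solution by c₀, it satisfies c₀ > 1. -/

import Mathlib

/-- Two distinct positive roots of `exp t = 2t + 1` are impossible, since together
with the root `t = 0` they would violate strict convexity of `exp`. -/
lemma no_two_roots {a b : ℝ} (ha : 0 < a) (hab : a < b)
    (h1 : Real.exp a = 2 * a + 1) (h2 : Real.exp b = 2 * b + 1) : False := by
  have hb : 0 < b := ha.trans hab
  have hw2 : (0:ℝ) < a / b := div_pos ha hb
  have hw1 : (0:ℝ) < 1 - a / b := by
    have : a / b < 1 := (div_lt_one hb).2 hab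
    linarith
  have hsum : (1 - a / b) + a / b = 1 := by ring
  have key := strictConvexOn_exp.2 (Set.mem_univ (0:ℝ)) (Set.mem_univ b)
    hb.ne hw1 hw2 hsum
  have hcomb : (1 - a / b) • (0:ℝ) + (a / b) • b = a := by
    simp only [smul_eq_mul, mul_zero, zero_add]
    field_simp
  rw [hcomb, Real.exp_zero, h1, h2] at key
  simp only [smul_eq_mul] at key
  have hrhs : (1 - a / b) * 1 + (a / b) * (2 * b + 1) = 2 * a + 1 := by
    field_simp; ring
  linarith

/-- The equation `z² + 1 = exp(z²/2)` has exactly one solution `z ∈ (0, ∞)`;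
denoting it by `c₀`, it satisfies `c₀ > 1`. -/
theorem stmt1 :
    ∃ c₀ : ℝ, 1 < c₀ ∧ c₀ ^ 2 + 1 = Real.exp (c₀ ^ 2 / 2) ∧
      ∀ z : ℝ, 0 < z → z ^ 2 + 1 = Real.exp (z ^ 2 / 2) → z = c₀ := by
  set f : ℝ → ℝ := fun t => Real.exp t - (2 * t + 1) with hf
  have hcont : ContinuousOn f (Set.Icc (1/2 : ℝ) 2) :=
    (Real.continuous_exp.sub (by continuity)).continuousOn
  have hexp1lt : Real.exp 1 < 2.7182818286 := Real.exp_one_lt_d9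
  have hexp1gt : 2.7182818283 < Real.exp 1 := Real.exp_one_gt_d9
  have hhalf : Real.exp (1/2) < 2 := by
    have hmul : Real.exp (1/2) * Real.exp (1/2) = Real.exp 1 := by
      rw [← Real.exp_add]; norm_num
    nlinarith [Real.exp_pos (1/2 : ℝ)]
  have htwo : (5:ℝ) < Real.exp 2 := by
    have hmul : Real.exp 1 * Real.exp 1 = Real.exp 2 := by
      rw [← Real.exp_add]; norm_num
    nlinarith
  have hfa : f (1/2) < 0 := by simp only [hf]; linarith
  have hfb : (0:ℝ) < f 2 := by simp only [hf]; linarith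
  have hmem : (0:ℝ) ∈ Set.Ioo (f (1/2)) (f 2) := ⟨hfa, hfb⟩
  obtain ⟨t₀, ht₀mem, ht₀⟩ := intermediate_value_Ioo (by norm_num : (1/2:ℝ) ≤ 2) hcont hmem
  have ht₀pos : 0 < t₀ := lt_trans (by norm_num) ht₀mem.1
  have ht₀eq : Real.exp t₀ = 2 * t₀ + 1 := by
    have := ht₀; simp only [hf] at this; linarith
  set c₀ := Real.sqrt (2 * t₀) with hc₀
  have hsq : c₀ ^ 2 = 2 * t₀ := Real.sq_sqrt (by linarith)
  have hc₀gt : 1 < c₀ := by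
    have h1 : (1:ℝ) = Real.sqrt 1 := (Real.sqrt_one).symm
    rw [h1, hc₀]
    exact Real.sqrt_lt_sqrt (by norm_num) (by linarith [ht₀mem.1])
  refine ⟨c₀, hc₀gt, ?_, ?_⟩
  · rw [hsq]
    have : 2 * t₀ / 2 = t₀ := by ring
    rw [this, ht₀eq]
  · intro z hz hzeq
    set s := z ^ 2 / 2 with hs
    have hspos : 0 < s := by positivity
    have hseq : Real.exp s = 2 * s + 1 := by
      rw [← hzeq, hs]; ring
    have hst : s = t₀ := by
      rcases lt_trichotomy s t₀ with h | h | h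
      · exact absurd (no_two_roots hspos h hseq ht₀eq) not_false
      · exact h
      · exact absurd (no_two_roots ht₀pos h ht₀eq hseq) not_false
    have : z ^ 2 = 2 * t₀ := by rw [← hst, hs]; ring
    calc z = Real.sqrt (z ^ 2) := (Real.sqrt_sq hz.le).symm
      _ = c₀ := by rw [this]
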